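/- arXiv:2602.12861 — 2 statements merged into one kernel-verified Lean document; each statement's English description precedes it below -/
import Mathlib

section
/- Let L be a Lawson compact algebraic L-domain with its Scott topology. Then the nonempty co-prime elements of the lattice CO(L) of compact-open subsets (ordered by inclusion) are precisely the principal filters ↑k with k ∈ K(L); that is, a nonempty compact-open set U is co-prime in CO(L) if and only if U = ↑k for some compact element k of L. -/
section Domains

variable (P : Type*) [PartialOrder P]

/-- A dcpo: every nonempty directed subset has a least upper bound. -/
def DirectedComplete : Prop :=
  ∀ D : Set P, D.Nonempty → DirectedOn (· ≤ ·) D → ∃ s, IsLUB D s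

variable {P}

/-- A compact (finite) element of a poset. -/
def IsCompactElt (k : P) : Prop :=
  ∀ D : Set P, D.Nonempty → DirectedOn (· ≤ ·) D → ∀ s : P, IsLUB D s → k ≤ s →
    ∃ d ∈ D, k ≤ d

/-- A Scott-open subset: an upper set inaccessible by directed suprema. -/
def ScottOpen (U : Set P) : Prop :=
  IsUpperSet U ∧ ∀ D : Set P, D.Nonempty → DirectedOn (· ≤ ·) D → ∀ s : P, IsLUB D s →
    s ∈ U → (D ∩ U).Nonempty

/-- Compactness of a set with respect to covers by Scott-open sets. -/
def ScottCompactSet (K : Set P) : Prop :=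
  ∀ C : Set (Set P), (∀ V ∈ C, ScottOpen V) → K ⊆ ⋃₀ C →
    ∃ F : Finset (Set P), ↑F ⊆ C ∧ K ⊆ ⋃₀ (F : Set (Set P))

variable (P)

/-- The collection of compact-open subsets (w.r.t. the Scott topology). -/
def CO : Set (Set P) := {U | ScottOpen U ∧ ScottCompactSet U}

/-- An algebraic domain: a dcpo in which, for every `x`, the set of compact elements
below `x` is a (nonempty) directed set with least upper bound `x`. -/
def IsAlgebraicDomain : Prop :=
  DirectedComplete P ∧
  ∀ x : P,
    (Set.Iic x ∩ {k | IsCompactElt k}).Nonempty ∧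
    DirectedOn (· ≤ ·) (Set.Iic x ∩ {k | IsCompactElt k}) ∧
    IsLUB (Set.Iic x ∩ {k | IsCompactElt k}) x

/-- Every principal ideal `↓x` is a complete lattice in the induced order
(equivalently: every subset of `↓x` has a least upper bound inside `↓x`). -/
def PrincipalIdealsComplete : Prop :=
  ∀ x : P, ∀ S : Set P, S ⊆ Set.Iic x →
    ∃ s, s ≤ x ∧ (∀ a ∈ S, a ≤ s) ∧ ∀ u, u ≤ x → (∀ a ∈ S, a ≤ u) → s ≤ u

/-- An algebraic L-domain. -/
def IsAlgebraicLDomain : Prop := IsAlgebraicDomain P ∧ PrincipalIdealsComplete P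

/-- The Lawson topology: generated by the Scott-open sets together with complements
of principal filters. -/
def lawsonTopology : TopologicalSpace P :=
  TopologicalSpace.generateFrom ({U | ScottOpen U} ∪ {U | ∃ x : P, U = (Set.Ici x)ᶜ})

/-- Lawson compactness: compactness in the Lawson topology. -/
def LawsonCompact : Prop := @CompactSpace P (lawsonTopology P)

end Domains

section FDD

variable {L : Type*} [Lattice L] [BoundedOrder L]

/-- A nonzero co-prime element. -/
def CoprimeElt (a : L) : Prop :=
  a ≠ ⊥ ∧ ∀ x y : L, a ≤ x ⊔ y → a ≤ x ∨ a ≤ y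

/-- A finitely disjunctive distributive lattice (FDD-lattice): a bounded distributive
lattice in which (1) every element is a finite join of nonzero co-primes, and
(2) the meet of two nonzero co-primes is a finite join of pairwise disjoint
nonzero co-primes. -/
def IsFDD (L : Type*) [DistribLattice L] [BoundedOrder L] : Prop :=
  (∀ x : L, ∃ F : Finset L, (∀ a ∈ F, CoprimeElt a) ∧ x = F.sup id) ∧
  (∀ a b : L, CoprimeElt a → CoprimeElt b →
    ∃ F : Finset L, (∀ c ∈ F, CoprimeElt c) ∧
      (∀ c ∈ F, ∀ d ∈ F, c ≠ d → c ⊓ d = ⊥) ∧ a ⊓ b = F.sup id)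

/-- A point of a bounded lattice: a lattice homomorphism into the two-element
bounded lattice `Bool` preserving `0`, `1`, binary meets and binary joins. -/
def IsPoint (p : L → Bool) : Prop :=
  p ⊥ = false ∧ p ⊤ = true ∧
  (∀ x y : L, p (x ⊓ y) = (p x && p y)) ∧
  (∀ x y : L, p (x ⊔ y) = (p x || p y))

end FDD

/-- The poset of points of a bounded lattice, with the pointwise order. -/
def Pt (L : Type*) [Lattice L] [BoundedOrder L] : Type _ :=
  {p : L → Bool // IsPoint p}

noncomputable instance (L : Type*) [Lattice L] [BoundedOrder L] : PartialOrder (Pt L) :=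
  inferInstanceAs (PartialOrder {p : L → Bool // IsPoint p})

/-- `γ_a : L → {0,1}`, `γ_a x = 1` iff `a ≤ x`. -/
noncomputable def gammaPt {L : Type*} [Lattice L] [BoundedOrder L] (a : L) : L → Bool :=
  fun x => @decide (a ≤ x) (Classical.propDecidable _)

/-- A bounded lattice homomorphism. -/
def IsBLH {L M : Type*} [Lattice L] [BoundedOrder L] [Lattice M] [BoundedOrder M]
    (f : L → M) : Prop :=
  f ⊥ = ⊥ ∧ f ⊤ = ⊤ ∧ (∀ x y, f (x ⊓ y) = f x ⊓ f y) ∧ (∀ x y, f (x ⊔ y) = f x ⊔ f y)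

/-!
A compact-open set `U` is covered by the Scott-open filters `↑k`, `k ∈ U ∩ K(P)` (this is
algebraicity), hence by finitely many of them. Compact-open sets are closed under finite unions,
so a co-prime `U` lies in one `↑k`, and `↑k ⊆ U` since `U` is an upper set. Conversely `↑k` is
co-prime among upper sets because any upper set containing `k` contains `↑k`.
-/

lemma exists_mem_subset_of_subset_sUnion {α : Type*} {S : Set (Set α)} (hS : SupClosed S)
    (hempty : ∅ ∈ S) {U : Set α} (hU : U.Nonempty)
    (hcp : ∀ V ∈ S, ∀ W ∈ S, U ⊆ V ∪ W → U ⊆ V ∨ U ⊆ W) {F : Finset (Set α)} (hFS : ↑F ⊆ S)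
    (hUF : U ⊆ ⋃₀ ↑F) : ∃ V ∈ F, U ⊆ V := by
  classical
  induction F using Finset.induction_on with
  | empty => simp [Set.subset_empty_iff, hU.ne_empty] at hUF
  | insert V F _ ih =>
    rw [Finset.coe_insert, Set.insert_subset_iff] at hFS
    have hsUnion : ⋃₀ (F : Set (Set α)) ∈ S := by
      rw [← Finset.sup_id_set_eq_sUnion]
      rcases F.eq_empty_or_nonempty with rfl | hF
      · exact hempty
      · exact hS.finsetSup_mem hF hFS.2
    rw [Finset.coe_insert, Set.sUnion_insert] at hUF
    rcases hcp V hFS.1 _ hsUnion hUF with hUV | hUF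
    · exact ⟨V, Finset.mem_insert_self V F, hUV⟩
    · obtain ⟨W, hW, hUW⟩ := ih hFS.2 hUF
      exact ⟨W, Finset.mem_insert_of_mem hW, hUW⟩

section CompactOpen

variable {P : Type*} [PartialOrder P]

lemma IsCompactElt.scottOpen_Ici {k : P} (hk : IsCompactElt k) : ScottOpen (Set.Ici k) :=
  ⟨fun _ _ hab ha => ha.trans hab, hk⟩

lemma IsCompactElt.Ici_mem_CO {k : P} (hk : IsCompactElt k) : Set.Ici k ∈ CO P := by
  refine ⟨hk.scottOpen_Ici, fun C hC hcov => ?_⟩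
  obtain ⟨V, hV, hkV⟩ := hcov Set.self_mem_Ici
  exact ⟨{V}, by simpa using hV, fun x hx => ⟨V, by simp, (hC V hV).1 hx hkV⟩⟩

lemma empty_mem_CO : (∅ : Set P) ∈ CO P :=
  ⟨⟨isUpperSet_empty, fun _ _ _ _ _ h => h.elim⟩, fun _ _ _ => ⟨∅, by simp, by simp⟩⟩

lemma ScottOpen.union {U V : Set P} (hU : ScottOpen U) (hV : ScottOpen V) :
    ScottOpen (U ∪ V) := by
  refine ⟨hU.1.union hV.1, fun D hD hdir s hs => ?_⟩
  rintro (h | h)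
  · exact (hU.2 D hD hdir s hs h).mono (Set.inter_subset_inter_right _ Set.subset_union_left)
  · exact (hV.2 D hD hdir s hs h).mono (Set.inter_subset_inter_right _ Set.subset_union_right)

lemma ScottCompactSet.union {K K' : Set P} (hK : ScottCompactSet K) (hK' : ScottCompactSet K') :
    ScottCompactSet (K ∪ K') := by
  classical
  intro C hC hcov
  obtain ⟨F, hFC, hKF⟩ := hK C hC (Set.subset_union_left.trans hcov)
  obtain ⟨F', hF'C, hK'F'⟩ := hK' C hC (Set.subset_union_right.trans hcov)
  refine ⟨F ∪ F', ?_, ?_⟩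
  · rw [Finset.coe_union]
    exact Set.union_subset hFC hF'C
  · rw [Finset.coe_union, Set.sUnion_union]
    exact Set.union_subset_union hKF hK'F'

lemma supClosed_CO : SupClosed (CO P) :=
  fun _ hU _ hV => ⟨hU.1.union hV.1, hU.2.union hV.2⟩

lemma ScottOpen.exists_isCompactElt_mem_le (hP : IsAlgebraicDomain P) {U : Set P}
    (hU : ScottOpen U) {x : P} (hx : x ∈ U) : ∃ k, IsCompactElt k ∧ k ∈ U ∧ k ≤ x := by
  obtain ⟨hne, hdir, hlub⟩ := hP.2 x
  obtain ⟨k, ⟨hkx, hk⟩, hkU⟩ := hU.2 _ hne hdir x hlub hx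
  exact ⟨k, hk, hkU, hkx⟩

lemma exists_eq_Ici_of_coprime (hP : IsAlgebraicDomain P) {U : Set P} (hU : U ∈ CO P)
    (hne : U.Nonempty) (hcp : ∀ V ∈ CO P, ∀ W ∈ CO P, U ⊆ V ∪ W → U ⊆ V ∨ U ⊆ W) :
    ∃ k, IsCompactElt k ∧ U = Set.Ici k := by
  obtain ⟨F, hFC, hUF⟩ := hU.2 (Set.Ici '' {k | IsCompactElt k ∧ k ∈ U})
    (by rintro _ ⟨k, ⟨hk, -⟩, rfl⟩; exact hk.scottOpen_Ici)
    (fun x hx => by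
      obtain ⟨k, hk, hkU, hkx⟩ := hU.1.exists_isCompactElt_mem_le hP hx
      exact ⟨Set.Ici k, ⟨k, ⟨hk, hkU⟩, rfl⟩, hkx⟩)
  have hFCO : ↑F ⊆ CO P := by
    rintro _ hV
    obtain ⟨k, ⟨hk, -⟩, rfl⟩ := hFC hV
    exact hk.Ici_mem_CO
  obtain ⟨V, hVF, hUV⟩ :=
    exists_mem_subset_of_subset_sUnion supClosed_CO empty_mem_CO hne hcp hFCO hUF
  obtain ⟨k, ⟨hk, hkU⟩, rfl⟩ := hFC hVF
  exact ⟨k, hk, hUV.antisymm (hU.1.1.Ici_subset hkU)⟩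

end CompactOpen

theorem stmt1_general (P : Type*) [PartialOrder P]
    (h1 : IsAlgebraicLDomain P) :
    ∀ U ∈ CO P, U ≠ ∅ →
      ((∀ V ∈ CO P, ∀ W ∈ CO P, U ⊆ V ∪ W → U ⊆ V ∨ U ⊆ W) ↔
        ∃ k : P, IsCompactElt k ∧ U = Set.Ici k) := by
  intro U hU hUne
  refine ⟨exists_eq_Ici_of_coprime h1.1 hU (Set.nonempty_iff_ne_empty.2 hUne), ?_⟩
  rintro ⟨k, -, rfl⟩ V hV W hW hsub
  exact (hsub Set.self_mem_Ici).imp (hV.1.1.Ici_subset ·) (hW.1.1.Ici_subset ·)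

/-- In a Lawson compact algebraic L-domain `P`, the nonempty co-prime
elements of the lattice `CO P` of compact-open sets (ordered by inclusion, so that
joins are unions) are precisely the principal filters `↑k` of compact elements. -/
theorem stmt1 (P : Type*) [PartialOrder P]
    (h1 : IsAlgebraicLDomain P) (h2 : LawsonCompact P) :
    ∀ U ∈ CO P, U ≠ ∅ →
      ((∀ V ∈ CO P, ∀ W ∈ CO P, U ⊆ V ∪ W → U ⊆ V ∨ U ⊆ W) ↔
        ∃ k : P, IsCompactElt k ∧ U = Set.Ici k) :=
  stmt1_general P h1
end

section
/- Let L be an FDD-lattice and p a point of L. Then the set H_p = {γ_a : a ∈ Cp(L), γ_a ≤ p} is a nonempty directed subset of pt(L). -/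
/-! A point `p` preserves finite joins, and every element is a finite join of co-primes, so
whenever `p x = 1` there is a co-prime `c ≤ x` with `p c = 1`, i.e. `γ_c ≤ p`. Taking `x = ⊤`
gives nonemptiness; taking `x = a ⊓ b` gives an upper bound `γ_c` of `γ_a` and `γ_b`, since
`c ≤ a` implies `γ_a ≤ γ_c`. -/

section Points

variable {L : Type*} [Lattice L] [BoundedOrder L] {p : L → Bool}

theorem IsPoint.apply_mono (hp : IsPoint p) {x y : L} (hxy : x ≤ y) (hx : p x = true) :
    p y = true := by
  have h := hp.2.2.1 x y
  rw [inf_eq_left.mpr hxy, hx] at h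
  exact (Bool.and_eq_true_iff.1 h.symm).2

theorem IsPoint.exists_mem_of_apply_sup (hp : IsPoint p) (F : Finset L)
    (h : p (F.sup id) = true) : ∃ a ∈ F, p a = true := by
  classical
  induction F using Finset.induction_on with
  | empty => simp [hp.1] at h
  | insert x F _ ih =>
    rw [Finset.sup_insert, hp.2.2.2, Bool.or_eq_true] at h
    rcases h with hx | hF
    · exact ⟨x, Finset.mem_insert_self x F, hx⟩
    · obtain ⟨a, ha, hpa⟩ := ih hF
      exact ⟨a, Finset.mem_insert_of_mem ha, hpa⟩

theorem gammaPt_eq_true {a x : L} : gammaPt a x = true ↔ a ≤ x := by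
  simp [gammaPt]

theorem isPoint_gammaPt {a : L} (ha : CoprimeElt a) : IsPoint (gammaPt a) := by
  refine ⟨?_, ?_, fun x y => ?_, fun x y => ?_⟩
  · simpa [gammaPt] using ha.1
  · simp [gammaPt]
  · rw [Bool.eq_iff_iff]
    simp only [Bool.and_eq_true, gammaPt_eq_true, le_inf_iff]
  · rw [Bool.eq_iff_iff]
    simp only [Bool.or_eq_true, gammaPt_eq_true]
    exact ⟨ha.2 x y, fun h => h.elim (·.trans le_sup_left) (·.trans le_sup_right)⟩

theorem gammaPt_le_iff (hp : IsPoint p) {a : L} : gammaPt a ≤ p ↔ p a = true := by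
  refine ⟨fun h => ?_, fun ha x => ?_⟩
  · have haa := h a
    rw [gammaPt_eq_true.2 le_rfl] at haa
    exact top_le_iff.1 haa
  · cases hx : gammaPt a x
    · exact Bool.false_le _
    · rw [hp.apply_mono (gammaPt_eq_true.1 hx) ha]

theorem gammaPt_le_gammaPt {a b : L} (hb : CoprimeElt b) (hba : b ≤ a) :
    gammaPt a ≤ gammaPt b :=
  (gammaPt_le_iff (isPoint_gammaPt hb)).2 (gammaPt_eq_true.2 hba)

theorem IsPoint.exists_coprimeElt_le
    (hL : ∀ x : L, ∃ F : Finset L, (∀ a ∈ F, CoprimeElt a) ∧ x = F.sup id)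
    (hp : IsPoint p) {x : L} (hx : p x = true) :
    ∃ c, CoprimeElt c ∧ c ≤ x ∧ p c = true := by
  obtain ⟨F, hF, rfl⟩ := hL x
  obtain ⟨c, hcF, hpc⟩ := hp.exists_mem_of_apply_sup F hx
  exact ⟨c, hF c hcF, Finset.le_sup (f := id) hcF, hpc⟩

end Points

/-- For an FDD-lattice `L` and a point `p`, the set
`H_p = {γ_a : a ∈ Cp(L), γ_a ≤ p}` is a nonempty directed subset of `Pt L`. -/
theorem stmt5 {L : Type*} [DistribLattice L] [BoundedOrder L] (hL : IsFDD L)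
    (p : Pt L) :
    ({q : Pt L | ∃ a : L, CoprimeElt a ∧ q.1 = gammaPt a ∧ q ≤ p}).Nonempty ∧
    DirectedOn (· ≤ ·) {q : Pt L | ∃ a : L, CoprimeElt a ∧ q.1 = gammaPt a ∧ q ≤ p} := by
  obtain ⟨p, hp⟩ := p
  have mem {c : L} (hc : CoprimeElt c) (hpc : p c = true) :
      (⟨gammaPt c, isPoint_gammaPt hc⟩ : Pt L) ∈
        {q : Pt L | ∃ a : L, CoprimeElt a ∧ q.1 = gammaPt a ∧ q ≤ ⟨p, hp⟩} :=
    ⟨c, hc, rfl, (gammaPt_le_iff hp).2 hpc⟩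
  constructor
  · obtain ⟨c, hc, -, hpc⟩ := hp.exists_coprimeElt_le hL.1 hp.2.1
    exact ⟨_, mem hc hpc⟩
  · rintro ⟨_, _⟩ ⟨a, ha, rfl, hap⟩ ⟨_, _⟩ ⟨b, hb, rfl, hbp⟩
    have hpa : p a = true := (gammaPt_le_iff hp).1 hap
    have hpb : p b = true := (gammaPt_le_iff hp).1 hbp
    obtain ⟨c, hc, hcab, hpc⟩ :=
      hp.exists_coprimeElt_le hL.1 (x := a ⊓ b) (by rw [hp.2.2.1, hpa, hpb]; rfl)
    exact ⟨_, mem hc hpc, gammaPt_le_gammaPt hc (hcab.trans inf_le_left),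
      gammaPt_le_gammaPt hc (hcab.trans inf_le_right)⟩
end
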